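/- arXiv:2104.01578 — 4 statements merged into one kernel-verified Lean document; each statement's English description precedes it below -/
import Mathlib

section
/- For every integer n ≥ 2, the complete bipartite graph K_{n,n} has the Pairing-Hamiltonian property: every perfect matching M of the complete graph on the vertex set of K_{n,n} can be extended to a Hamiltonian cycle H of that complete graph such that every edge of H not in M is an edge of K_{n,n}. -/
/-!
A pairing `M` of `K_{α,β}` splits into `k` edges inside `α`, `l` edges inside `β` and `m` cross
edges, with `2k + m = |α|` and `2l + m = |β|`, so `k = l` when `|α| = |β|`. Traverse the edges of
`M` in the order `a₁ b₁ a₂ b₂ … a_k b_k c₁ … c_m`, with the `aᵢ` inside `α`, the `bᵢ` inside `β`,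
and every cross edge `cⱼ` entered from its end in `α`. Each step from one edge of `M` to the next
then joins the two sides, so it is an edge of `K_{α,β}`, and closing up gives the required
Hamiltonian cycle.
-/

open SimpleGraph

/-- A graph `G` has the Pairing-Hamiltonian property if every pairing `M` of `G`
(i.e. perfect matching of the complete graph on `V(G)`) extends to a Hamiltonian
cycle `H` of the complete graph all of whose edges outside `M` are edges of `G`. -/
def HasPH {V : Type} [DecidableEq V] (G : SimpleGraph V) : Prop :=
  ∀ M : (⊤ : SimpleGraph V).Subgraph, M.IsPerfectMatching →
    ∃ (a : V) (p : (⊤ : SimpleGraph V).Walk a a), p.IsHamiltonianCycle ∧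
      (∀ e ∈ M.edgeSet, e ∈ p.edges) ∧
      (∀ e ∈ p.edges, e ∉ M.edgeSet → e ∈ G.edgeSet)

open Finset Function

namespace List

variable {α : Type*}

theorem perm_flatMap_pair (l : List (α × α)) :
    l.flatMap (fun p => [p.1, p.2]) ~ l.map Prod.fst ++ l.map Prod.snd := by
  induction l with
  | nil => simp
  | cons p l ih =>
    simp only [flatMap_cons, map_cons, cons_append, nil_append]
    exact ((ih.cons p.2).trans perm_middle.symm).cons p.1

theorem isChain_flatMap_pair_append {R : α → α → Prop} {l : List (α × α)} {rest : List α}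
    (hpair : ∀ p ∈ l, R p.1 p.2) (hlink : l.IsChain fun p q => R p.2 q.1)
    (hlast : ∀ p ∈ l.getLast?, ∀ y ∈ rest.head?, R p.2 y) (hrest : rest.IsChain R) :
    (l.flatMap (fun p => [p.1, p.2]) ++ rest).IsChain R := by
  induction l with
  | nil => simpa
  | cons p l ih =>
    simp only [flatMap_cons, cons_append, nil_append, isChain_cons_cons]
    refine ⟨hpair p mem_cons_self, isChain_cons.2
      ⟨?_, ih (fun q hq => hpair q (mem_cons_of_mem _ hq)) hlink.tail ?_⟩⟩
    · cases l with
      | nil => simpa using hlast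
      | cons q l => simpa using hlink.rel
    · cases l with
      | nil => simp
      | cons q l => simpa using hlast

theorem isChain_zip_flatMap_append {R : α → α → Prop} {la lb lc : List α} {z : α}
    (hab : ∀ a ∈ la, ∀ b ∈ lb, R a b) (hba : ∀ b ∈ lb, ∀ y ∈ la ++ lc ++ [z], R b y)
    (hc : ∀ x ∈ lc, ∀ y ∈ la ++ lc ++ [z], R x y) :
    ((la.zip lb).flatMap (fun p => [p.1, p.2]) ++ lc ++ [z]).IsChain R := by
  rw [append_assoc]
  refine isChain_flatMap_pair_append (fun p hp => hab _ (of_mem_zip hp).1 _ (of_mem_zip hp).2)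
    (pairwise_of_forall_mem_list fun p hp q hq =>
      hba _ (of_mem_zip hp).2 _ (by simp [(of_mem_zip hq).1])).isChain
    (fun p hp y hy => hba _ (of_mem_zip (mem_of_getLast? hp)).2 _ ?_) ?_
  · have := mem_of_head? hy
    simp_all
  · exact (pairwise_append.2
      ⟨pairwise_of_forall_mem_list fun x hx y hy => hc x hx y (by simp [hy]),
        pairwise_singleton _ _, fun x hx y hy => hc x hx y (by simp_all)⟩).isChain

theorem nodup_append_map_of_mem_iff_apply_notMem {f : α → α} (hf : Injective f) {E : List α}
    (hE : E.Nodup) (htr : ∀ v, v ∈ E ↔ f v ∉ E) : (E ++ E.map f).Nodup := by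
  refine nodup_append.2 ⟨hE, hE.map hf, ?_⟩
  rintro _ ha _ hb rfl
  obtain ⟨b, hbE, rfl⟩ := mem_map.1 hb
  exact (htr b).1 hbE ha

theorem mem_append_map_of_mem_iff_apply_notMem {f : α → α} (hf : Involutive f) {E : List α}
    (htr : ∀ v, v ∈ E ↔ f v ∉ E) (v : α) : v ∈ E ++ E.map f := by
  by_cases hv : v ∈ E
  · exact mem_append_left _ hv
  · exact mem_append_right _ (mem_map.2 ⟨f v, not_not.1 (mt (htr v).2 hv), hf v⟩)

end List

namespace SimpleGraph

variable {V : Type*} {G : SimpleGraph V}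

theorem Walk.edges_subset_of_isChain_support {u v : V} {p : G.Walk u v} {S : Set (Sym2 V)}
    (h : p.support.IsChain fun x y => s(x, y) ∈ S) : ∀ e ∈ p.edges, e ∈ S := by
  intro e he
  induction e using Sym2.ind with
  | _ x y =>
    rcases Walk.infix_support_iff_mem_edges.2 he with hxy | hyx
    · exact List.isChain_pair.1 (h.infix hxy)
    · exact Sym2.eq_swap ▸ List.isChain_pair.1 (h.infix hyx)

theorem exists_isHamiltonianCycle_top [Fintype V] [DecidableEq V] {a : V} {l : List V}
    (hnd : (a :: l).Nodup) (hmem : ∀ v, v ∈ a :: l) (hcard : 3 ≤ Fintype.card V) :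
    ∃ p : (⊤ : SimpleGraph V).Walk a a, p.IsHamiltonianCycle ∧ p.support = a :: l ++ [a] := by
  have hlen : Fintype.card V = l.length + 1 :=
    (Fintype.card_congr (hnd.getEquivOfForallMemList _ hmem)).symm.trans (Fintype.card_fin _)
  have hnd' : (l ++ [a]).Nodup := (List.perm_append_singleton a l).nodup_iff.2 hnd
  have hchain : (a :: l ++ [a]).IsChain (⊤ : SimpleGraph V).Adj := by
    refine hnd'.isChain.cons fun y hy => ?_
    cases l with
    | nil => simp at hlen; omega
    | cons b l =>
      simp only [List.cons_append, List.head?_cons, Option.mem_some_iff] at hy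
      exact hy ▸ (List.nodup_cons.1 hnd).1 ∘ (· ▸ List.mem_cons_self)
  obtain ⟨p, hp⟩ : ∃ p : (⊤ : SimpleGraph V).Walk a a,
      p.support = (Walk.ofSupport _ (List.cons_ne_nil _ _) hchain).support :=
    ⟨(Walk.ofSupport _ _ hchain).copy rfl (by simp), Walk.support_copy _ _ _⟩
  rw [Walk.support_ofSupport] at hp
  refine ⟨p, ?_, hp⟩
  have hplen : p.length = l.length + 1 := by
    have h := congrArg List.length hp
    rw [Walk.length_support] at h
    simpa using h
  rw [Walk.isHamiltonianCycle_iff_isCycle_and_support_count_tail_eq_one, hp,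
    Walk.isCycle_iff_isPath_tail_and_le_length, Walk.isPath_def,
    Walk.support_tail_of_not_nil _ (by simp [← Walk.length_eq_zero_iff, hplen]), hp]
  refine ⟨⟨hnd', by omega⟩, fun v => List.count_eq_one_of_mem hnd' ?_⟩
  simpa [or_comm] using hmem v

theorem exists_isHamiltonianCycle_of_pairs [Fintype V] [DecidableEq V]
    {M : (⊤ : SimpleGraph V).Subgraph} (hM : M.IsMatching) {p₀ : V × V} {P : List (V × V)}
    (hnd : ((p₀ :: P).flatMap fun p => [p.1, p.2]).Nodup)
    (hmem : ∀ v, v ∈ (p₀ :: P).flatMap fun p => [p.1, p.2])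
    (hpair : ∀ p ∈ p₀ :: P, M.Adj p.1 p.2)
    (hlink : (p₀ :: P ++ [p₀]).IsChain fun p q => G.Adj p.2 q.1)
    (hcard : 3 ≤ Fintype.card V) :
    ∃ (a : V) (c : (⊤ : SimpleGraph V).Walk a a), c.IsHamiltonianCycle ∧
      (∀ e ∈ M.edgeSet, e ∈ c.edges) ∧ (∀ e ∈ c.edges, e ∉ M.edgeSet → e ∈ G.edgeSet) := by
  obtain ⟨c, hc, hsupp⟩ := exists_isHamiltonianCycle_top hnd hmem hcard
  have hsupp' : c.support = (p₀ :: P).flatMap (fun p => [p.1, p.2]) ++ [p₀.1] := hsupp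
  have hpair_mem : ∀ p ∈ p₀ :: P, s(p.1, p.2) ∈ c.edges := fun p hp =>
    Walk.infix_support_iff_mem_edges.1 <| Or.inl <| hsupp' ▸
      (List.infix_of_mem_flatten (List.mem_map_of_mem (f := fun p : V × V => [p.1, p.2]) hp)).trans
        (List.prefix_append _ _).isInfix
  refine ⟨p₀.1, c, hc, fun e he => ?_, fun e he heM => ?_⟩
  · induction e using Sym2.ind with
    | _ x y =>
      have hxy : M.Adj x y := he
      obtain ⟨p, hp, hxp⟩ := List.mem_flatMap.1 (hmem x)
      rcases List.mem_pair.1 hxp with rfl | rfl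
      · rw [hM.eq_of_adj_left hxy (hpair p hp)]
        exact hpair_mem p hp
      · rw [hM.eq_of_adj_left hxy (hpair p hp).symm, Sym2.eq_swap]
        exact hpair_mem p hp
  · obtain ⟨hlink', -, hclose⟩ := List.isChain_append.1 hlink
    refine (Walk.edges_subset_of_isChain_support (S := M.edgeSet ∪ G.edgeSet) ?_ e he).resolve_left
      heM
    rw [hsupp']
    refine List.isChain_flatMap_pair_append (fun p hp => Or.inl (hpair p hp))
      (hlink'.imp fun p q h => Or.inr h) ?_ (List.isChain_singleton _)
    rintro p hp _ ⟨⟩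
    exact Or.inr (hclose p hp p₀ rfl)

end SimpleGraph

theorem Function.Involutive.exists_finset_mem_iff_apply_notMem {α : Type*} [Fintype α]
    {f : α → α} (hf : Involutive f) (hfix : ∀ x, f x ≠ x) :
    ∃ T : Finset α, ∀ x, x ∈ T ↔ f x ∉ T := by
  let e := Fintype.equivFin α
  refine ⟨univ.filter fun x => e x < e (f x), fun x => ?_⟩
  simp only [mem_filter, mem_univ, true_and, hf x, not_lt]
  exact ⟨le_of_lt, fun h => h.lt_of_ne (e.injective.ne (hfix x).symm)⟩

theorem Function.Involutive.card_filter_eq_two_mul {α : Type*} [Fintype α] [DecidableEq α]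
    {f : α → α} (hf : Involutive f) {T : Finset α} (hT : ∀ x, x ∈ T ↔ f x ∉ T)
    {p : α → Prop} [DecidablePred p] (hp : ∀ x, p (f x) ↔ p x) :
    #{x | p x} = 2 * #{x ∈ T | p x} := by
  have hin : #{x | p x ∧ x ∈ T} = #{x ∈ T | p x} :=
    card_equiv (Equiv.refl α) fun x => by simp [and_comm]
  have hout : #{x | p x ∧ x ∉ T} = #{x ∈ T | p x} :=
    card_equiv hf.toPerm fun x => by simp [hp, hT x, and_comm]
  rw [← card_filter_add_card_filter_not (s := {x | p x}) (· ∈ T), filter_filter, filter_filter,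
    hin, hout, two_mul]

theorem card_monochromatic_eq {α : Type*} [Fintype α] [DecidableEq α] {f : α → α}
    (hf : Involutive f) {T : Finset α} (hT : ∀ x, x ∈ T ↔ f x ∉ T) {c : α → Bool}
    (hbal : #{x | c x = false} = #{x | c x = true}) :
    #{x ∈ T | c x = false ∧ c (f x) = false} = #{x ∈ T | c x = true ∧ c (f x) = true} := by
  have hsplit (b : Bool) :
      #{x | c x = b} = #{x | c x = b ∧ c (f x) = b} + #{x | c x = b ∧ c (f x) ≠ b} := by
    rw [← card_filter_add_card_filter_not (s := {x | c x = b}) (fun x => c (f x) = b),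
      filter_filter, filter_filter]
  have hcross : #{x | c x = false ∧ c (f x) ≠ false} = #{x | c x = true ∧ c (f x) ≠ true} :=
    card_equiv hf.toPerm fun x => by simp [hf x, and_comm]
  have hmono (b : Bool) :
      #{x | c x = b ∧ c (f x) = b} = 2 * #{x ∈ T | c x = b ∧ c (f x) = b} :=
    hf.card_filter_eq_two_mul hT fun x => by simp [hf x, and_comm]
  have := hsplit false
  have := hsplit true
  have := hmono false
  have := hmono true
  omega

open List in
theorem exists_transversal_lists_of_balanced {α : Type*} [Fintype α] [DecidableEq α]
    {f : α → α} (hf : Involutive f) (hfix : ∀ x, f x ≠ x) {c : α → Bool}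
    (hbal : #{x | c x = false} = #{x | c x = true}) :
    ∃ la lb lc : List α, la.length = lb.length ∧ (la ++ lb ++ lc).Nodup ∧
      (∀ v, v ∈ la ++ lb ++ lc ↔ f v ∉ la ++ lb ++ lc) ∧
      (∀ a ∈ la, c a = false ∧ c (f a) = false) ∧ (∀ b ∈ lb, c b = true ∧ c (f b) = true) ∧
      (∀ x ∈ lc, c x = false ∧ c (f x) = true) := by
  obtain ⟨T, hT⟩ := hf.exists_finset_mem_iff_apply_notMem hfix
  obtain ⟨la, hla⟩ : ∃ l, l = {x ∈ T | c x = false ∧ c (f x) = false}.toList := ⟨_, rfl⟩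
  obtain ⟨lb, hlb⟩ : ∃ l, l = {x ∈ T | c x = true ∧ c (f x) = true}.toList := ⟨_, rfl⟩
  obtain ⟨lc, hlc⟩ : ∃ l, l = (univ.filter fun x => c x = false ∧ c (f x) = true).toList :=
    ⟨_, rfl⟩
  have memA : ∀ v, v ∈ la ↔ v ∈ T ∧ c v = false ∧ c (f v) = false := by simp [hla]
  have memB : ∀ v, v ∈ lb ↔ v ∈ T ∧ c v = true ∧ c (f v) = true := by simp [hlb]
  have memC : ∀ v, v ∈ lc ↔ c v = false ∧ c (f v) = true := by simp [hlc]
  refine ⟨la, lb, lc, by simp [hla, hlb, card_monochromatic_eq hf hT hbal], ?_, fun v => ?_,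
    fun a ha => ((memA a).1 ha).2, fun b hb => ((memB b).1 hb).2, fun x hx => (memC x).1 hx⟩
  · refine nodup_append.2 ⟨nodup_append.2 ⟨hla ▸ nodup_toList _, hlb ▸ nodup_toList _, ?_⟩,
      hlc ▸ nodup_toList _, ?_⟩
    · rintro a ha _ hb rfl
      exact absurd ((memB a).1 hb).2.1 (by simp [((memA a).1 ha).2.1])
    · rintro a ha _ hc rfl
      rcases mem_append.1 ha with ha | hb
      · exact absurd ((memC a).1 hc).2 (by simp [((memA a).1 ha).2.2])
      · exact absurd ((memC a).1 hc).1 (by simp [((memB a).1 hb).2.1])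
  · have := hT v
    simp only [mem_append, memA, memB, memC, hf v]
    cases c v <;> cases c (f v) <;> simp <;> tauto

open List in
theorem exists_cyclic_transversal_of_balanced {α : Type*} [Fintype α] [DecidableEq α]
    [Nonempty α] {f : α → α} (hf : Involutive f) (hfix : ∀ x, f x ≠ x) {c : α → Bool}
    (hbal : #{x | c x = false} = #{x | c x = true}) :
    ∃ (x : α) (E : List α), (x :: E).Nodup ∧ (∀ v, v ∈ x :: E ↔ f v ∉ x :: E) ∧
      (x :: E ++ [x]).IsChain fun u v => c (f u) ≠ c v := by
  obtain ⟨la, lb, lc, hlen, hnd, htr, hA, hB, hC⟩ :=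
    exists_transversal_lists_of_balanced hf hfix hbal
  obtain ⟨E, hE⟩ : ∃ E, E = (la.zip lb).flatMap (fun p => [p.1, p.2]) ++ lc := ⟨_, rfl⟩
  have hperm : E ~ la ++ lb ++ lc := by
    have := perm_flatMap_pair (la.zip lb)
    rw [map_fst_zip hlen.le, map_snd_zip hlen.ge] at this
    exact hE ▸ this.append_right lc
  obtain ⟨x, E', rfl⟩ : ∃ x E', E = x :: E' := by
    refine exists_cons_of_ne_nil fun h => ?_
    obtain ⟨v⟩ := ‹Nonempty α›
    have := htr v
    rw [← hperm.mem_iff, ← hperm.mem_iff, h] at this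
    simp at this
  refine ⟨x, E', hperm.nodup_iff.2 hnd, fun v => by rw [hperm.mem_iff, hperm.mem_iff]; exact htr v,
    ?_⟩
  have hx : c x = false := by
    rcases la with _ | ⟨a, la'⟩
    · obtain rfl : lb = [] := length_eq_zero_iff.1 hlen.symm
      have hlc : x :: E' = lc := by simpa using hE
      exact (hC x (hlc ▸ mem_cons_self)).1
    · obtain ⟨b, lb', rfl⟩ : ∃ b lb', lb = b :: lb' :=
        exists_cons_of_ne_nil (by rintro rfl; simp at hlen)
      have hxa : x = a := by simpa using congrArg head? hE
      exact (hA x (by simp [hxa])).1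
  have hleft : ∀ y ∈ la ++ lc ++ [x], c y = false := by
    intro y hy
    simp only [mem_append, List.mem_singleton] at hy
    rcases hy with (hy | hy) | rfl
    exacts [(hA y hy).1, (hC y hy).1, hx]
  rw [hE]
  refine isChain_zip_flatMap_append (fun a ha b hb => ?_) (fun b hb y hy => ?_)
    (fun z hz y hy => ?_)
  · simp [(hA a ha).2, (hB b hb).1]
  · simp [(hB b hb).2, hleft y hy]
  · simp [(hC z hz).2, hleft y hy]

theorem hasPH_of_balanced_coloring {V : Type} [Fintype V] [DecidableEq V] {G : SimpleGraph V}
    (c : V → Bool) (hc : ∀ u v, c u ≠ c v → G.Adj u v)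
    (hbal : #{v | c v = false} = #{v | c v = true}) (hcard : 3 ≤ Fintype.card V) :
    HasPH G := by
  intro M hM
  choose f hf using fun v => (Subgraph.isPerfectMatching_iff.1 hM v).exists
  have hinv : Involutive f := fun v => hM.1.eq_of_adj_left (hf (f v)) (hf v).symm
  have hfix : ∀ v, f v ≠ v := fun v => (hf v).ne.symm
  have : Nonempty V := Fintype.card_pos_iff.1 (by omega)
  obtain ⟨x, E, hnd, htr, hchain⟩ := exists_cyclic_transversal_of_balanced hinv hfix hbal
  have hperm : (((x :: E).map fun y => (y, f y)).flatMap fun p => [p.1, p.2]).Perm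
      (x :: E ++ (x :: E).map f) := by
    simpa [Function.comp_def] using List.perm_flatMap_pair ((x :: E).map fun y => (y, f y))
  refine exists_isHamiltonianCycle_of_pairs hM.1 (p₀ := (x, f x)) (P := E.map fun y => (y, f y))
    (hperm.nodup_iff.2 (List.nodup_append_map_of_mem_iff_apply_notMem hinv.injective hnd htr))
    (fun v => hperm.mem_iff.2 (List.mem_append_map_of_mem_iff_apply_notMem hinv htr v))
    (by simpa using ⟨hf x, fun y _ => hf y⟩) ?_ hcard
  simpa using (List.isChain_map fun y => (y, f y)).2 (hchain.imp fun u v h => hc _ _ h)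

theorem hasPH_completeBipartiteGraph {α β : Type} [Fintype α] [Fintype β] [DecidableEq α]
    [DecidableEq β] (hcard : Fintype.card α = Fintype.card β) (htwo : 2 ≤ Fintype.card α) :
    HasPH (completeBipartiteGraph α β) := by
  have hleft : #{v : α ⊕ β | v.isLeft = true} = Fintype.card α := by
    rw [← Fintype.card_subtype]
    exact Fintype.card_congr Equiv.sumIsLeft
  have hright : #{v : α ⊕ β | v.isLeft = false} = Fintype.card β := by
    simp only [Sum.isLeft_eq_false]
    rw [← Fintype.card_subtype]
    exact Fintype.card_congr Equiv.sumIsRight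
  refine hasPH_of_balanced_coloring Sum.isLeft (fun u v h => ?_) (by rw [hleft, hright, hcard])
    (by rw [Fintype.card_sum]; omega)
  cases u <;> cases v <;> simp_all

/-- For every `n ≥ 2`, the complete bipartite graph `K_{n,n}` has the
Pairing-Hamiltonian property. -/
theorem completeBipartite_hasPH (n : ℕ) (hn : 2 ≤ n) :
    HasPH (completeBipartiteGraph (Fin n) (Fin n)) :=
  hasPH_completeBipartiteGraph (α := Fin n) (β := Fin n) rfl (by simpa using hn)
end

section
/- If m₂ ≥ 3 is odd, then the rook graph K₂ □ K_{m₂} does not have the Pairing-Hamiltonian property. In particular, the pairing consisting of the m₂ edges joining corresponding vertices of the two copies of K_{m₂} cannot be extended to a Hamiltonian cycle of the complete graph on the vertex set using only rook-graph edges outside the pairing. -/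
/-!
Put the two copies of `K_m` in rows `0` and `1`. A Hamiltonian cycle containing the vertical
pairing `M` whose other edges are rook edges can only change rows along edges of `M`, so it
crosses between the rows exactly `m` times. A closed walk crosses any cut an even number of
times, hence `m` is even.
-/

open SimpleGraph

/-- The vertical pairing of `K₂ □ K_m`, matching `(0,j)` with `(1,j)` for each `j`. -/
def verticalPairing (m : ℕ) : ((⊤ : SimpleGraph (Fin 2 × Fin m))).Subgraph where
  verts := Set.univ
  Adj a b := a.1 ≠ b.1 ∧ a.2 = b.2
  adj_sub := by
    rintro ⟨a1, a2⟩ ⟨b1, b2⟩ ⟨h1, h2⟩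
    simp only [top_adj]
    intro h; apply h1; rw [h]
  edge_vert := by intro a b _; trivial
  symm := by constructor; rintro a b ⟨h1, h2⟩; exact ⟨h1.symm, h2.symm⟩

namespace SimpleGraph

theorem Walk.even_countP_darts_ne_iff {V : Type*} {G : SimpleGraph V} (f : V → Fin 2)
    {u v : V} (p : G.Walk u v) :
    Even (p.darts.countP fun d => f d.fst ≠ f d.snd) ↔ f u = f v := by
  induction p with
  | nil => simp
  | @cons u w v h p ih =>
    rw [darts_cons, List.countP_cons]
    split_ifs with huw
    · rw [Nat.even_add_one, ih]
      simp only [decide_eq_true_eq] at huw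
      omega
    · rw [add_zero, ih]
      simp only [decide_eq_true_eq, not_not] at huw
      rw [huw]

theorem boxProd_snd_eq_of_adj_of_fst_ne {α β : Type*} {G : SimpleGraph α} {H : SimpleGraph β}
    {x y : α × β} (h : (G □ H).Adj x y) (hne : x.1 ≠ y.1) : x.2 = y.2 := by
  rcases boxProd_adj.1 h with ⟨-, h⟩ | ⟨-, h⟩
  · exact h
  · exact absurd h hne

end SimpleGraph

lemma verticalPairing_isPerfectMatching (m : ℕ) : (verticalPairing m).IsPerfectMatching := by
  refine Subgraph.isPerfectMatching_iff.2 fun v =>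
    ⟨(v.1 + 1, v.2), ⟨show v.1 ≠ v.1 + 1 by omega, rfl⟩, ?_⟩
  rintro w ⟨hne, h⟩
  exact Prod.ext (show w.1 = v.1 + 1 by omega) h.symm

def verticalEdge (m : ℕ) (j : Fin m) : Sym2 (Fin 2 × Fin m) := s((0, j), (1, j))

lemma edgeSet_verticalPairing (m : ℕ) :
    (verticalPairing m).edgeSet = Set.range (verticalEdge m) := by
  ext e
  induction e using Sym2.ind with
  | _ x y =>
    obtain ⟨x1, x2⟩ := x
    obtain ⟨y1, y2⟩ := y
    fin_cases x1 <;> fin_cases y1 <;> simp [verticalPairing, verticalEdge, eq_comm]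

lemma verticalEdge_injective (m : ℕ) : Function.Injective (verticalEdge m) := by
  intro i j h
  simpa [verticalEdge] using h

theorem not_exists_isHamiltonianCycle_extending_verticalPairing {m : ℕ} (hodd : Odd m) :
    ¬ ∃ (a : Fin 2 × Fin m) (p : (⊤ : SimpleGraph (Fin 2 × Fin m)).Walk a a),
        p.IsHamiltonianCycle ∧
        (∀ e ∈ (verticalPairing m).edgeSet, e ∈ p.edges) ∧
        (∀ e ∈ p.edges, e ∉ (verticalPairing m).edgeSet →
          e ∈ ((⊤ : SimpleGraph (Fin 2)) □ (⊤ : SimpleGraph (Fin m))).edgeSet) := by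
  rintro ⟨a, p, hp, hMp, hpG⟩
  have crosses_iff : ∀ d ∈ p.darts,
      d.fst.1 ≠ d.snd.1 ↔ d.edge ∈ (verticalPairing m).edgeSet := by
    intro d hd
    refine ⟨fun hne => ?_, fun hM => hM.1⟩
    by_contra hM
    have hG := hpG d.edge (List.mem_map_of_mem hd) hM
    exact hM ⟨hne, boxProd_snd_eq_of_adj_of_fst_ne hG hne⟩
  have hperm : ((p.darts.filter fun d => d.fst.1 ≠ d.snd.1).map Dart.edge).Perm
      ((List.finRange m).map (verticalEdge m)) := by
    refine (List.perm_ext_iff_of_nodup ((List.filter_sublist.map _).nodup hp.edges_nodup)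
      ((List.nodup_finRange m).map (verticalEdge_injective m))).2 fun e => ?_
    have hmemM :
        e ∈ (verticalPairing m).edgeSet ↔ e ∈ (List.finRange m).map (verticalEdge m) := by
      simp [edgeSet_verticalPairing]
    rw [← hmemM, List.mem_map]
    constructor
    · rintro ⟨d, hd, rfl⟩
      rw [List.mem_filter, decide_eq_true_iff] at hd
      exact (crosses_iff d hd.1).1 hd.2
    · intro he
      obtain ⟨d, hd, rfl⟩ := List.mem_map.1 (hMp e he)
      exact ⟨d, List.mem_filter.2 ⟨hd, decide_eq_true ((crosses_iff d hd).2 he)⟩, rfl⟩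
  have heven : Even m := by
    have h := (p.even_countP_darts_ne_iff Prod.fst).2 rfl
    rwa [List.countP_eq_length_filter, ← List.length_map Dart.edge, hperm.length_eq,
      List.length_map, List.length_finRange] at h
  exact Nat.not_even_iff_odd.2 hodd heven

theorem rook_two_odd_not_PH_general (m : ℕ) (hodd : Odd m) :
    ¬ HasPH ((⊤ : SimpleGraph (Fin 2)) □ (⊤ : SimpleGraph (Fin m))) ∧
    ¬ ∃ (a : Fin 2 × Fin m) (p : (⊤ : SimpleGraph (Fin 2 × Fin m)).Walk a a),
        p.IsHamiltonianCycle ∧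
        (∀ e ∈ (verticalPairing m).edgeSet, e ∈ p.edges) ∧
        (∀ e ∈ p.edges, e ∉ (verticalPairing m).edgeSet →
          e ∈ ((⊤ : SimpleGraph (Fin 2)) □ (⊤ : SimpleGraph (Fin m))).edgeSet) :=
  ⟨fun hPH => not_exists_isHamiltonianCycle_extending_verticalPairing hodd
      (hPH _ (verticalPairing_isPerfectMatching m)),
    not_exists_isHamiltonianCycle_extending_verticalPairing hodd⟩

/-- For odd `m₂ ≥ 3`, the rook graph `K₂ □ K_{m₂}` does not have the PH-property;
in particular the vertical pairing cannot be extended to a Hamiltonian cycle. -/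
theorem rook_two_odd_not_PH (m : ℕ) (hm : 3 ≤ m) (hodd : Odd m) :
    ¬ HasPH ((⊤ : SimpleGraph (Fin 2)) □ (⊤ : SimpleGraph (Fin m))) ∧
    ¬ ∃ (a : Fin 2 × Fin m) (p : (⊤ : SimpleGraph (Fin 2 × Fin m)).Walk a a),
        p.IsHamiltonianCycle ∧
        (∀ e ∈ (verticalPairing m).edgeSet, e ∈ p.edges) ∧
        (∀ e ∈ p.edges, e ∉ (verticalPairing m).edgeSet →
          e ∈ ((⊤ : SimpleGraph (Fin 2)) □ (⊤ : SimpleGraph (Fin m))).edgeSet) :=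
  rook_two_odd_not_PH_general m hodd
end

section
/- The 2 × m₂ bishop-on-a-rook graph, i.e. the graph on [2] × [m₂] (vertices the cells of a 2 × m₂ board) with (i,j) ~ (k,l) iff j = l, or (i ≠ k and j ≠ l), has the Pairing-Hamiltonian property for every m₂ ≥ 2. -/
open SimpleGraph

/-- The `m₁ × m₂` bishop-on-a-rook graph: cells `(i,j)` of an `m₁ × m₂` board,
two cells adjacent iff they lie in distinct rows (vertical or diagonal moves). -/
def borGraph (m₁ m₂ : ℕ) : SimpleGraph (Fin m₁ × Fin m₂) where
  Adj a b := a.1 ≠ b.1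
  symm := ⟨fun _ _ h => h.symm⟩
  loopless := ⟨fun _ h => h rfl⟩

set_option linter.unusedSectionVars false

namespace BorPH

variable {V : Type} [DecidableEq V]

private def mkWalk : (a : V) → (l : List V) → (c : V) →
    List.Chain (· ≠ ·) a (l ++ [c]) → (⊤ : SimpleGraph V).Walk a c
  | a, [], c, h =>
      Walk.cons (by simpa using (List.chain_cons.mp h).1) Walk.nil
  | a, b :: l, c, h =>
      Walk.cons (by simpa using (List.chain_cons.mp h).1)
        (mkWalk b l c (List.chain_cons.mp h).2)

private lemma mkWalk_support : ∀ (a : V) (l : List V) (c : V) (h),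
    (mkWalk a l c h).support = a :: (l ++ [c])
  | _, [], _, _ => rfl
  | a, b :: l, c, h => by
      simp [mkWalk, mkWalk_support b l c]
      exact mkWalk_support b l c _

private lemma mkWalk_edges : ∀ (a : V) (l : List V) (c : V) (h),
    (mkWalk a l c h).edges
      = List.zipWith (fun x y => s(x, y)) (a :: (l ++ [c])) (l ++ [c])
  | _, [], _, _ => rfl
  | a, b :: l, c, h => by
      simp [mkWalk, mkWalk_edges b l c]
      exact mkWalk_edges b l c _

private lemma mem_zip_pairs (x y : V) : ∀ (l₁ l₂ : List V),
    s(x, y) ∈ List.zipWith (fun u v => s(u, v)) (l₁ ++ x :: y :: l₂)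
      (l₁ ++ x :: y :: l₂).tail
  | [], l₂ => by simp
  | a :: l₁, l₂ => by
      have ih := mem_zip_pairs x y l₁ l₂
      cases h : l₁ ++ x :: y :: l₂ with
      | nil => simp at h
      | cons b m2 =>
          rw [h] at ih
          simp only [List.cons_append, h, List.tail_cons, List.zipWith_cons_cons,
            List.mem_cons]
          exact Or.inr (by simpa using ih)

private lemma zip_pairs_mem : ∀ (m : List V) (e : Sym2 V),
    e ∈ List.zipWith (fun u v => s(u, v)) m m.tail →
    ∃ l₁ x y l₂, m = l₁ ++ x :: y :: l₂ ∧ e = s(x, y)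
  | [], e => by simp
  | [a], e => by simp
  | a :: b :: m, e => by
      intro he
      simp only [List.tail_cons, List.zipWith_cons_cons, List.mem_cons] at he
      rcases he with he | he
      · exact ⟨[], a, b, m, by simp, he⟩
      · obtain ⟨l₁, x, y, l₂, hm, hexy⟩ := zip_pairs_mem (b :: m) e (by simpa using he)
        exact ⟨a :: l₁, x, y, l₂, by simp [hm], hexy⟩

private lemma mem_tail_of_decomp (l₁ : List V) (x y : V) (l₂ : List V) :
    y ∈ (l₁ ++ x :: y :: l₂).tail := by
  cases l₁ <;> simp

private lemma mem_dropLast_of_decomp (l₁ : List V) (x y : V) (l₂ : List V) :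
    x ∈ (l₁ ++ x :: y :: l₂).dropLast := by
  rw [List.dropLast_append_of_ne_nil (l := x :: y :: l₂) (by simp)]
  simp

private lemma exists_hamCycle (Rr : V → V → Prop) [Fintype V]
    (hR : ∀ x y, Rr x y → x ≠ y)
    (a b : V) (r : List V) (hr : r ≠ [])
    (hn : (a :: b :: r).Nodup)
    (hcov : ∀ v : V, v ∈ a :: b :: r)
    (hch : List.Chain Rr a ((b :: r) ++ [a])) :
    ∃ p : (⊤ : SimpleGraph V).Walk a a, p.IsHamiltonianCycle ∧
      (∀ x y (l₁ l₂ : List V), a :: b :: r = l₁ ++ x :: y :: l₂ → s(x, y) ∈ p.edges) ∧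
      (∀ e ∈ p.edges, ∃ x y, Rr x y ∧ e = s(x, y)) := by
  have hch' : List.Chain (· ≠ ·) a ((b :: r) ++ [a]) :=
    List.IsChain.imp (fun x y hxy => hR x y hxy) hch
  have hab : a ≠ b := (List.chain_cons.mp hch').1
  have hch2 : List.Chain (· ≠ ·) b (r ++ [a]) := (List.chain_cons.mp hch').2
  set q : (⊤ : SimpleGraph V).Walk b a := mkWalk b r a hch2 with hq
  have hqs : q.support = b :: (r ++ [a]) := mkWalk_support b r a hch2
  have hqe : q.edges = List.zipWith (fun x y => s(x, y)) (b :: (r ++ [a])) (r ++ [a]) :=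
    mkWalk_edges b r a hch2
  have hanbr : a ∉ b :: r := (List.nodup_cons.mp hn).1
  have hbnr : b ∉ r := (List.nodup_cons.mp (List.nodup_cons.mp hn).2).1
  have hrn : r.Nodup := (List.nodup_cons.mp (List.nodup_cons.mp hn).2).2
  have hmnd : (b :: (r ++ [a])).Nodup := by
    rw [show b :: (r ++ [a]) = (b :: r) ++ [a] by simp, List.nodup_append]
    exact ⟨(List.nodup_cons.mp hn).2, List.nodup_singleton a,
      fun x hx y hy hxy => hanbr (by subst hxy; simpa [List.mem_singleton.mp hy] using hx)⟩
  have hqpath : q.IsPath := Walk.IsPath.mk' (by rw [hqs]; exact hmnd)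
  have hedge_ab : s(a, b) ∉ q.edges := by
    intro hmem
    rw [hqe] at hmem
    have hmem' : s(a, b) ∈ List.zipWith (fun u v => s(u, v)) (b :: (r ++ [a]))
        (b :: (r ++ [a])).tail := by simpa using hmem
    obtain ⟨l₁, x, y, l₂, hm, hexy⟩ := zip_pairs_mem _ _ hmem'
    rcases Sym2.eq_iff.mp hexy with ⟨rfl, rfl⟩ | ⟨rfl, rfl⟩
    · have hx : a ∈ (b :: (r ++ [a])).dropLast := by
        rw [hm]; exact mem_dropLast_of_decomp l₁ a b l₂
      rw [show b :: (r ++ [a]) = (b :: r) ++ [a] by simp, List.dropLast_concat] at hx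
      exact hanbr hx
    · cases l₁ with
      | nil =>
          simp only [List.nil_append, List.cons.injEq] at hm
          have hra : r ++ [a] = a :: l₂ := by simpa using hm.2
          cases r with
          | nil => exact hr rfl
          | cons c r' =>
              have hc : c = a := by simpa using congrArg List.head? hra
              exact hanbr (by exact List.mem_cons_of_mem _ (by simp [hc]))
      | cons c l₁' =>
          have hy : b ∈ (b :: (r ++ [a])).tail := by
            rw [hm]
            simp only [List.cons_append, List.tail_cons]
            exact List.mem_append_right _ (by simp)
          simp only [List.tail_cons, List.mem_append, List.mem_singleton] at hy
          rcases hy with hy | hy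
          · exact hbnr hy
          · exact hab hy.symm
  have hadj : (⊤ : SimpleGraph V).Adj a b := by simpa using hab
  set p : (⊤ : SimpleGraph V).Walk a a := Walk.cons hadj q with hp
  have hcyc : p.IsCycle := (Walk.cons_isCycle_iff q hadj).mpr ⟨hqpath, hedge_ab⟩
  have hpe : p.edges = List.zipWith (fun u v => s(u, v)) (a :: (b :: (r ++ [a])))
      (a :: (b :: (r ++ [a]))).tail := by
    rw [hp, Walk.edges_cons, hqe]; rfl
  refine ⟨p, ?_, ?_, ?_⟩
  · rw [Walk.isHamiltonianCycle_iff_isCycle_and_support_count_tail_eq_one]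
    refine ⟨hcyc, fun v => ?_⟩
    have hsup : p.support.tail = b :: (r ++ [a]) := by
      rw [hp, Walk.support_cons, List.tail_cons, hqs]
    rw [hsup]
    refine List.count_eq_one_of_mem hmnd ?_
    have hv := hcov v
    simp only [List.mem_cons, List.mem_append, List.mem_singleton] at hv ⊢
    tauto
  · intro x y l₁ l₂ hdec
    have hm : a :: (b :: (r ++ [a])) = l₁ ++ x :: y :: (l₂ ++ [a]) := by
      have := congrArg (· ++ [a]) hdec
      simpa using this
    rw [hpe, hm]
    exact mem_zip_pairs x y l₁ (l₂ ++ [a])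
  · intro e he
    rw [hpe] at he
    obtain ⟨l₁, x, y, l₂, hm, hexy⟩ := zip_pairs_mem _ _ he
    refine ⟨x, y, ?_, hexy⟩
    have hch'' : List.Chain' Rr (a :: (b :: (r ++ [a]))) := hch
    have : List.Chain' Rr [x, y] := hch''.infix ⟨l₁, l₂, by rw [hm]; simp⟩
    exact List.isChain_pair.mp this

private lemma fin2_cases (i : Fin 2) : i = 0 ∨ i = 1 := by revert i; decide
private lemma fin2_ne (i : Fin 2) : ¬ i = 1 ↔ i = 0 := by revert i; decide
private lemma fin2_ne' (i : Fin 2) : ¬ i = 0 ↔ i = 1 := by revert i; decide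

private lemma sum_map_const {α : Type} (l : List α) (n : ℕ) :
    (l.map (fun _ => n)).sum = n * l.length := by
  induction l with
  | nil => simp
  | cons a l ih =>
      simp [ih, Nat.mul_succ]
      ring

private lemma nodup_of_card {α : Type} [DecidableEq α] (l : List α)
    (h : l.toFinset.card = l.length) : l.Nodup := by
  rw [← Multiset.coe_nodup]
  exact Multiset.toFinset_card_eq_card_iff_nodup.mp (by simpa using h)

private lemma two_mul_card_filter_lt {α : Type} [LinearOrder α] [DecidableEq α]
    (s : Finset α) (g : α → α)
    (hmem : ∀ x ∈ s, g x ∈ s) (hinv : ∀ x ∈ s, g (g x) = x) (hne : ∀ x ∈ s, g x ≠ x) :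
    2 * (s.filter (fun x => x < g x)).card = s.card := by
  classical
  have h1 := Finset.card_filter_add_card_filter_not (s := s) (p := fun x => x < g x)
  have h2 : s.filter (fun x => ¬ x < g x) = s.filter (fun x => g x < x) :=
    Finset.filter_congr (fun x hx => by
      have hx' := hne x hx
      constructor
      · intro h; exact lt_of_le_of_ne (not_lt.mp h) hx'
      · intro h; exact not_lt.mpr h.le)
  have h3 : (s.filter (fun x => g x < x)).card = (s.filter (fun x => x < g x)).card := by
    refine Finset.card_bij (fun x _ => g x) ?_ ?_ ?_
    · intro x hx
      simp only [Finset.mem_filter] at hx ⊢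
      exact ⟨hmem x hx.1, by rw [hinv x hx.1]; exact hx.2⟩
    · intro x hx y hy hxy
      simp only [Finset.mem_filter] at hx hy
      have := congrArg g hxy
      rwa [hinv x hx.1, hinv y hy.1] at this
    · intro y hy
      simp only [Finset.mem_filter] at hy ⊢
      exact ⟨g y, ⟨hmem y hy.1, by rw [hinv y hy.1]; exact hy.2⟩, hinv y hy.1⟩
  rw [h2, h3] at h1
  omega

private lemma flatten_good {α : Type} (R : α → α → Prop) (g : α → Fin 2)
    (hR : ∀ x y, g x = 1 → g y = 0 → R x y) :
    ∀ bs : List (List α),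
    (∀ b ∈ bs, b ≠ [] ∧ b.Chain' R ∧ (∀ x ∈ b.head?, g x = 0) ∧ (∀ x ∈ b.getLast?, g x = 1)) →
    bs.flatten.Chain' R ∧ (∀ x ∈ bs.flatten.head?, g x = 0) ∧
      (∀ x ∈ bs.flatten.getLast?, g x = 1)
  | [], _ => by simp [List.Chain', List.isChain_nil]
  | b :: bs, hb => by
      obtain ⟨hbne, hbch, hbh, hbl⟩ := hb b (by simp)
      obtain ⟨ih1, ih2, ih3⟩ := flatten_good R g hR bs (fun b' hb' => hb b' (by simp [hb']))
      rw [List.flatten_cons]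
      refine ⟨?_, ?_, ?_⟩
      · rw [List.Chain', List.isChain_append]
        exact ⟨hbch, ih1, fun x hx y hy => hR x y (hbl x hx) (ih2 y hy)⟩
      · intro x hx
        cases b with
        | nil => exact absurd rfl hbne
        | cons c b' =>
            simp only [List.cons_append, List.head?_cons, Option.mem_some_iff] at hx
            exact hbh x (by simp [hx])
      · intro x hx
        cases hfl : bs.flatten with
        | nil => rw [hfl, List.append_nil] at hx; exact hbl x hx
        | cons c l' =>
            rw [hfl, List.getLast?_append_of_ne_nil _ (by simp)] at hx
            exact ih3 x (by rw [hfl]; exact hx)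

private lemma flatten_pair {α : Type} {bs : List (List α)} {b : List α} (hb : b ∈ bs)
    (pre post : List α) (x y : α) (hbt : b = pre ++ x :: y :: post) :
    ∃ l₁ l₂, bs.flatten = l₁ ++ x :: y :: l₂ := by
  obtain ⟨s, t, rfl⟩ := List.append_of_mem hb
  refine ⟨s.flatten ++ pre, post ++ t.flatten, ?_⟩
  rw [List.flatten_append, List.flatten_cons, hbt]
  simp


private lemma prod_eq {A B : Type} (p : A × B) (a : A) (b : B)
    (h1 : p.1 = a) (h2 : p.2 = b) : p = (a, b) := by
  cases p; simp_all

private lemma exists_goodList (m₂ : ℕ) (hm : 2 ≤ m₂)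
    (f : Fin 2 × Fin m₂ → Fin 2 × Fin m₂)
    (hfi : ∀ v, f (f v) = v) (hfv : ∀ v, f v ≠ v) :
    ∃ L : List (Fin 2 × Fin m₂),
      L.length = 2 * m₂ ∧ (∀ v, v ∈ L) ∧
      L.Chain' (fun x y => y = f x ∨ x.1 ≠ y.1) ∧
      (∀ x ∈ L.head?, x.1 = (0 : Fin 2)) ∧
      (∀ x ∈ L.getLast?, x.1 = (1 : Fin 2)) ∧
      (∀ v, ∃ u l₁ l₂, s(u, f u) = s(v, f v) ∧ L = l₁ ++ u :: f u :: l₂) := by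
  classical
  set R : Fin 2 × Fin m₂ → Fin 2 × Fin m₂ → Prop :=
    fun x y => y = f x ∨ x.1 ≠ y.1 with hRdef
  -- involution facts
  have pure0 : ∀ j : Fin m₂, (f (0, j)).1 = 0 → f ((0 : Fin 2), (f (0, j)).2) = (0, j) := by
    intro j hj
    have h1 : f (0, j) = ((0 : Fin 2), (f (0, j)).2) := prod_eq _ _ _ hj rfl
    rw [← h1, hfi]
  have pure1 : ∀ k : Fin m₂, (f (1, k)).1 = 1 → f ((1 : Fin 2), (f (1, k)).2) = (1, k) := by
    intro k hk
    have h1 : f (1, k) = ((1 : Fin 2), (f (1, k)).2) := prod_eq _ _ _ hk rfl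
    rw [← h1, hfi]
  have mix0 : ∀ j : Fin m₂, (f (0, j)).1 = 1 → f ((1 : Fin 2), (f (0, j)).2) = (0, j) := by
    intro j hj
    have h1 : f (0, j) = ((1 : Fin 2), (f (0, j)).2) := prod_eq _ _ _ hj rfl
    rw [← h1, hfi]
  have mix1 : ∀ k : Fin m₂, (f (1, k)).1 = 0 → f ((0 : Fin 2), (f (1, k)).2) = (1, k) := by
    intro k hk
    have h1 : f (1, k) = ((0 : Fin 2), (f (1, k)).2) := prod_eq _ _ _ hk rfl
    rw [← h1, hfi]
  have snd_ne0 : ∀ j : Fin m₂, (f (0, j)).1 = 0 → (f (0, j)).2 ≠ j := by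
    intro j hj hc
    exact hfv (0, j) (by rw [prod_eq (f (0, j)) 0 j hj hc])
  have snd_ne1 : ∀ k : Fin m₂, (f (1, k)).1 = 1 → (f (1, k)).2 ≠ k := by
    intro k hk hc
    exact hfv (1, k) (by rw [prod_eq (f (1, k)) 1 k hk hc])
  -- the finsets
  set Q0 : Finset (Fin m₂) := Finset.univ.filter (fun j => (f (0, j)).1 = 0) with hQ0def
  set Q1 : Finset (Fin m₂) := Finset.univ.filter (fun k => (f (1, k)).1 = 1) with hQ1def
  set C0 : Finset (Fin m₂) := Finset.univ.filter (fun j => (f (0, j)).1 = 1) with hC0def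
  set C1 : Finset (Fin m₂) := Finset.univ.filter (fun k => (f (1, k)).1 = 0) with hC1def
  set P0 : Finset (Fin m₂) := Q0.filter (fun j => j < (f (0, j)).2) with hP0def
  set P1 : Finset (Fin m₂) := Q1.filter (fun k => k < (f (1, k)).2) with hP1def
  have hmemQ0 : ∀ j, j ∈ Q0 ↔ (f (0, j)).1 = 0 := by
    intro j; rw [hQ0def]; simp
  have hmemQ1 : ∀ k, k ∈ Q1 ↔ (f (1, k)).1 = 1 := by
    intro k; rw [hQ1def]; simp
  have hmemC0 : ∀ j, j ∈ C0 ↔ (f (0, j)).1 = 1 := by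
    intro j; rw [hC0def]; simp
  have hmemC1 : ∀ k, k ∈ C1 ↔ (f (1, k)).1 = 0 := by
    intro k; rw [hC1def]; simp
  have hmemP0 : ∀ j, j ∈ P0 ↔ (f (0, j)).1 = 0 ∧ j < (f (0, j)).2 := by
    intro j; rw [hP0def]; simp [hmemQ0 j, Finset.mem_filter]
  have hmemP1 : ∀ k, k ∈ P1 ↔ (f (1, k)).1 = 1 ∧ k < (f (1, k)).2 := by
    intro k; rw [hP1def]; simp [hmemQ1 k, Finset.mem_filter]
  -- cardinalities
  have hsplit0 : C0.card + Q0.card = m₂ := by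
    have h1 := Finset.card_filter_add_card_filter_not
      (s := (Finset.univ : Finset (Fin m₂))) (p := fun j => (f (0, j)).1 = 1)
    have h2 : Finset.univ.filter (fun j => ¬ (f (0, j)).1 = 1)
        = Finset.univ.filter (fun j => (f (0, j)).1 = 0) :=
      Finset.filter_congr (fun x _ => fin2_ne _)
    rw [h2] at h1
    rw [hC0def, hQ0def]
    simpa using h1
  have hsplit1 : C1.card + Q1.card = m₂ := by
    have h1 := Finset.card_filter_add_card_filter_not
      (s := (Finset.univ : Finset (Fin m₂))) (p := fun k => (f (1, k)).1 = 0)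
    have h2 : Finset.univ.filter (fun k => ¬ (f (1, k)).1 = 0)
        = Finset.univ.filter (fun k => (f (1, k)).1 = 1) :=
      Finset.filter_congr (fun x _ => fin2_ne' _)
    rw [h2] at h1
    rw [hC1def, hQ1def]
    simpa using h1
  have hCC : C0.card = C1.card := by
    refine Finset.card_bij (fun j _ => (f (0, j)).2) ?_ ?_ ?_
    · intro j hj
      rw [hmemC0] at hj
      rw [hmemC1]
      rw [mix0 j hj]
    · intro j hj j' hj' hjj
      rw [hmemC0] at hj hj'
      have e1 : f (0, j) = f (0, j') := by
        rw [prod_eq (f (0, j)) 1 _ hj rfl, prod_eq (f (0, j')) 1 _ hj' rfl, hjj]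
      have h2 := congrArg f e1
      rw [hfi, hfi] at h2
      simpa using h2
    · intro k hk
      rw [hmemC1] at hk
      refine ⟨(f (1, k)).2, ?_, ?_⟩
      · rw [hmemC0, mix1 k hk]
      · have h3 := congrArg Prod.snd (mix1 k hk)
        simpa using h3
  have hQP0 : 2 * P0.card = Q0.card := by
    rw [hP0def]
    refine two_mul_card_filter_lt Q0 (fun j => (f (0, j)).2) ?_ ?_ ?_
    · intro j hj
      rw [hmemQ0] at hj
      rw [hmemQ0, pure0 j hj]
    · intro j hj
      rw [hmemQ0] at hj
      exact congrArg Prod.snd (pure0 j hj)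
    · intro j hj
      rw [hmemQ0] at hj
      exact snd_ne0 j hj
  have hQP1 : 2 * P1.card = Q1.card := by
    rw [hP1def]
    refine two_mul_card_filter_lt Q1 (fun k => (f (1, k)).2) ?_ ?_ ?_
    · intro k hk
      rw [hmemQ1] at hk
      rw [hmemQ1, pure1 k hk]
    · intro k hk
      rw [hmemQ1] at hk
      exact congrArg Prod.snd (pure1 k hk)
    · intro k hk
      rw [hmemQ1] at hk
      exact snd_ne1 k hk
  have hPP : P0.card = P1.card := by omega
  -- the lists
  set LC := C0.sort (· ≤ ·) with hLCdef
  set LA := P0.sort (· ≤ ·) with hLAdef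
  set LB := P1.sort (· ≤ ·) with hLBdef
  have hlenAB : LA.length = LB.length := by
    rw [hLAdef, hLBdef, Finset.length_sort, Finset.length_sort, hPP]
  set bC : Fin m₂ → List (Fin 2 × Fin m₂) := fun j => [(0, j), f (0, j)] with hbCdef
  set bP : Fin m₂ × Fin m₂ → List (Fin 2 × Fin m₂) :=
    fun jk => [(0, jk.1), f (0, jk.1), (1, jk.2), f (1, jk.2)] with hbPdef
  set blocks := LC.map bC ++ (LA.zip LB).map bP with hblocksdef
  have hmemLC : ∀ j, j ∈ LC ↔ j ∈ C0 := by
    intro j; rw [hLCdef]; exact Finset.mem_sort _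
  have hmemLA : ∀ j, j ∈ LA ↔ j ∈ P0 := by
    intro j; rw [hLAdef]; exact Finset.mem_sort _
  have hmemLB : ∀ k, k ∈ LB ↔ k ∈ P1 := by
    intro k; rw [hLBdef]; exact Finset.mem_sort _
  have hblC : ∀ j ∈ LC, bC j ∈ blocks := by
    intro j hj
    rw [hblocksdef]
    exact List.mem_append_left _ (List.mem_map_of_mem hj)
  have hblP : ∀ p ∈ LA.zip LB, bP p ∈ blocks := by
    intro p hp
    rw [hblocksdef]
    exact List.mem_append_right _ (List.mem_map_of_mem hp)
  have hzipA : ∀ j ∈ LA, ∃ k, k ∈ LB ∧ (j, k) ∈ LA.zip LB := by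
    intro j hj
    have hmap := List.map_fst_zip (l₁ := LA) (l₂ := LB) (le_of_eq hlenAB)
    rw [← hmap] at hj
    obtain ⟨⟨j', k⟩, hp, hpe⟩ := List.mem_map.mp hj
    simp only at hpe
    subst hpe
    exact ⟨k, (List.of_mem_zip hp).2, hp⟩
  have hzipB : ∀ k ∈ LB, ∃ j, j ∈ LA ∧ (j, k) ∈ LA.zip LB := by
    intro k hk
    have hmap := List.map_snd_zip (l₁ := LA) (l₂ := LB) (le_of_eq hlenAB.symm)
    rw [← hmap] at hk
    obtain ⟨⟨j, k'⟩, hp, hpe⟩ := List.mem_map.mp hk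
    simp only at hpe
    subst hpe
    exact ⟨j, (List.of_mem_zip hp).1, hp⟩
  have hRg : ∀ x y : Fin 2 × Fin m₂, x.1 = 1 → y.1 = 0 → R x y := by
    intro x y hx hy
    exact Or.inr (by rw [hx, hy]; decide)
  have hgood : ∀ b ∈ blocks, b ≠ [] ∧ b.Chain' R ∧
      (∀ x ∈ b.head?, x.1 = (0 : Fin 2)) ∧ (∀ x ∈ b.getLast?, x.1 = (1 : Fin 2)) := by
    intro b hb
    rw [hblocksdef, List.mem_append] at hb
    rcases hb with hb | hb
    · obtain ⟨j, hj, rfl⟩ := List.mem_map.mp hb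
      have hj1 : (f (0, j)).1 = 1 := (hmemC0 j).mp ((hmemLC j).mp hj)
      refine ⟨by rw [hbCdef]; simp, ?_, ?_, ?_⟩
      · rw [hbCdef]
        exact List.isChain_pair.mpr (Or.inl rfl)
      · intro x hx
        simp only [hbCdef, List.head?_cons, Option.mem_some_iff] at hx
        subst hx
        rfl
      · intro x hx
        simp only [hbCdef, List.getLast?_cons_cons, List.getLast?_singleton,
          Option.mem_some_iff] at hx
        subst hx
        exact hj1
    · obtain ⟨⟨j, k⟩, hjk, rfl⟩ := List.mem_map.mp hb
      have hjP : j ∈ P0 := (hmemLA j).mp (List.of_mem_zip hjk).1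
      have hkP : k ∈ P1 := (hmemLB k).mp (List.of_mem_zip hjk).2
      have hj0 : (f (0, j)).1 = 0 := ((hmemP0 j).mp hjP).1
      have hk1 : (f (1, k)).1 = 1 := ((hmemP1 k).mp hkP).1
      refine ⟨by rw [hbPdef]; simp, ?_, ?_, ?_⟩
      · rw [hbPdef]
        have hmid : (f (0, (j, k).1)).1 ≠ ((1 : Fin 2), (j, k).2).1 := by
          rw [hj0]
          exact (by decide : (0 : Fin 2) ≠ 1)
        exact List.isChain_cons_cons.mpr ⟨Or.inl rfl, List.isChain_cons_cons.mpr
          ⟨Or.inr hmid, List.isChain_pair.mpr (Or.inl rfl)⟩⟩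
      · intro x hx
        simp only [hbPdef, List.head?_cons, Option.mem_some_iff] at hx
        subst hx
        rfl
      · intro x hx
        simp only [hbPdef, List.getLast?_cons_cons, List.getLast?_singleton,
          Option.mem_some_iff] at hx
        subst hx
        exact hk1
  obtain ⟨hchainL, hheadL, hlastL⟩ := flatten_good R Prod.fst hRg blocks hgood
  refine ⟨blocks.flatten, ?_, ?_, ?_, ?_, ?_, ?_⟩
  · -- length
    rw [List.length_flatten, hblocksdef, List.map_append, List.sum_append,
      List.map_map, List.map_map]
    have e1 : List.map (List.length ∘ bC) LC = LC.map (fun _ => 2) := by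
      apply List.map_congr_left
      intro j _
      simp [hbCdef]
    have e2 : List.map (List.length ∘ bP) (LA.zip LB) = (LA.zip LB).map (fun _ => 4) := by
      apply List.map_congr_left
      intro p _
      simp [hbPdef]
    rw [e1, e2, sum_map_const, sum_map_const, List.length_zip, hlenAB, min_self]
    have hLClen : LC.length = C0.card := by rw [hLCdef, Finset.length_sort]
    have hLBlen : LB.length = P1.card := by rw [hLBdef, Finset.length_sort]
    rw [hLClen, hLBlen]
    omega
  · -- coverage
    intro v
    rw [List.mem_flatten]
    obtain ⟨i, j⟩ := v
    rcases fin2_cases i with rfl | rfl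
    · by_cases hrow : (f (0, j)).1 = 1
      · refine ⟨bC j, hblC j ((hmemLC j).mpr ((hmemC0 j).mpr hrow)), ?_⟩
        rw [hbCdef]; simp
      · have h0 : (f (0, j)).1 = 0 := (fin2_ne _).mp hrow
        have hne2 : (f (0, j)).2 ≠ j := snd_ne0 j h0
        rcases hne2.lt_or_gt with hlt | hgt
        · -- (f (0,j)).2 < j : partner is the representative
          set j₂ := (f (0, j)).2 with hj₂
          have hj₂Q : (f (0, j₂)).1 = 0 := by rw [pure0 j h0]
          have hj₂snd : (f (0, j₂)).2 = j := by rw [pure0 j h0]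
          have hj₂P : j₂ ∈ P0 := (hmemP0 j₂).mpr ⟨hj₂Q, by rw [hj₂snd]; exact hlt⟩
          obtain ⟨k, _, hk⟩ := hzipA j₂ ((hmemLA j₂).mpr hj₂P)
          refine ⟨bP (j₂, k), hblP _ hk, ?_⟩
          rw [hbPdef]
          simp only [List.mem_cons]
          right; left
          rw [pure0 j h0]
        · -- j < (f (0,j)).2 : j is the representative
          have hjP : j ∈ P0 := (hmemP0 j).mpr ⟨h0, hgt⟩
          obtain ⟨k, _, hk⟩ := hzipA j ((hmemLA j).mpr hjP)
          refine ⟨bP (j, k), hblP _ hk, ?_⟩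
          rw [hbPdef]
          simp
    · by_cases hrow : (f (1, j)).1 = 0
      · -- mixed, partner in row 0
        set j₂ := (f (1, j)).2 with hj₂
        have hj₂C : (f (0, j₂)).1 = 1 := by rw [mix1 j hrow]
        refine ⟨bC j₂, hblC j₂ ((hmemLC j₂).mpr ((hmemC0 j₂).mpr hj₂C)), ?_⟩
        rw [hbCdef]
        simp only [List.mem_cons]
        right; left
        rw [mix1 j hrow]
      · have h1 : (f (1, j)).1 = 1 := (fin2_ne' _).mp hrow
        have hne2 : (f (1, j)).2 ≠ j := snd_ne1 j h1
        rcases hne2.lt_or_gt with hlt | hgt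
        · set j₂ := (f (1, j)).2 with hj₂
          have hj₂Q : (f (1, j₂)).1 = 1 := by rw [pure1 j h1]
          have hj₂snd : (f (1, j₂)).2 = j := by rw [pure1 j h1]
          have hj₂P : j₂ ∈ P1 := (hmemP1 j₂).mpr ⟨hj₂Q, by rw [hj₂snd]; exact hlt⟩
          obtain ⟨jj, _, hk⟩ := hzipB j₂ ((hmemLB j₂).mpr hj₂P)
          refine ⟨bP (jj, j₂), hblP _ hk, ?_⟩
          rw [hbPdef]
          simp only [List.mem_cons]
          right; right; right; left
          rw [pure1 j h1]
        · have hjP : j ∈ P1 := (hmemP1 j).mpr ⟨h1, hgt⟩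
          obtain ⟨jj, _, hk⟩ := hzipB j ((hmemLB j).mpr hjP)
          refine ⟨bP (jj, j), hblP _ hk, ?_⟩
          rw [hbPdef]
          simp
  · exact hchainL
  · exact hheadL
  · exact hlastL
  · -- pair decompositions
    intro v
    obtain ⟨i, j⟩ := v
    rcases fin2_cases i with rfl | rfl
    · by_cases hrow : (f (0, j)).1 = 1
      · obtain ⟨l₁, l₂, hd⟩ := flatten_pair
          (hblC j ((hmemLC j).mpr ((hmemC0 j).mpr hrow))) [] []
          (0, j) (f (0, j)) (by simp [hbCdef])
        exact ⟨(0, j), l₁, l₂, rfl, hd⟩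
      · have h0 : (f (0, j)).1 = 0 := (fin2_ne _).mp hrow
        rcases (snd_ne0 j h0).lt_or_gt with hlt | hgt
        · -- partner is the representative
          have hj₂Q : (f (0, (f (0, j)).2)).1 = 0 := by rw [pure0 j h0]
          have hj₂lt : (f (0, j)).2 < (f (0, (f (0, j)).2)).2 := by
            rw [pure0 j h0]; exact hlt
          have hj₂P : (f (0, j)).2 ∈ P0 := (hmemP0 _).mpr ⟨hj₂Q, hj₂lt⟩
          obtain ⟨k, _, hk⟩ := hzipA _ ((hmemLA _).mpr hj₂P)
          obtain ⟨l₁, l₂, hd⟩ := flatten_pair (hblP _ hk) [] [(1, k), f (1, k)]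
            (0, (f (0, j)).2) (f (0, (f (0, j)).2)) (by simp [hbPdef])
          refine ⟨(0, (f (0, j)).2), l₁, l₂, ?_, hd⟩
          rw [pure0 j h0, prod_eq (f (0, j)) 0 ((f (0, j)).2) h0 rfl]
          exact Sym2.eq_swap
        · have hjP : j ∈ P0 := (hmemP0 j).mpr ⟨h0, hgt⟩
          obtain ⟨k, _, hk⟩ := hzipA j ((hmemLA j).mpr hjP)
          obtain ⟨l₁, l₂, hd⟩ := flatten_pair (hblP _ hk) [] [(1, k), f (1, k)]
            (0, j) (f (0, j)) (by simp [hbPdef])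
          exact ⟨(0, j), l₁, l₂, rfl, hd⟩
    · by_cases hrow : (f (1, j)).1 = 0
      · have hj₂C : (f (0, (f (1, j)).2)).1 = 1 := by rw [mix1 j hrow]
        obtain ⟨l₁, l₂, hd⟩ := flatten_pair
          (hblC _ ((hmemLC _).mpr ((hmemC0 _).mpr hj₂C))) [] []
          (0, (f (1, j)).2) (f (0, (f (1, j)).2)) (by simp [hbCdef])
        refine ⟨(0, (f (1, j)).2), l₁, l₂, ?_, hd⟩
        rw [mix1 j hrow, prod_eq (f (1, j)) 0 ((f (1, j)).2) hrow rfl]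
        exact Sym2.eq_swap
      · have h1 : (f (1, j)).1 = 1 := (fin2_ne' _).mp hrow
        rcases (snd_ne1 j h1).lt_or_gt with hlt | hgt
        · have hj₂Q : (f (1, (f (1, j)).2)).1 = 1 := by rw [pure1 j h1]
          have hj₂lt : (f (1, j)).2 < (f (1, (f (1, j)).2)).2 := by
            rw [pure1 j h1]; exact hlt
          have hj₂P : (f (1, j)).2 ∈ P1 := (hmemP1 _).mpr ⟨hj₂Q, hj₂lt⟩
          obtain ⟨jj, _, hk⟩ := hzipB _ ((hmemLB _).mpr hj₂P)
          obtain ⟨l₁, l₂, hd⟩ := flatten_pair (hblP _ hk) [(0, jj), f (0, jj)] []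
            (1, (f (1, j)).2) (f (1, (f (1, j)).2)) (by simp [hbPdef])
          refine ⟨(1, (f (1, j)).2), l₁, l₂, ?_, hd⟩
          rw [pure1 j h1, prod_eq (f (1, j)) 1 ((f (1, j)).2) h1 rfl]
          exact Sym2.eq_swap
        · have hjP : j ∈ P1 := (hmemP1 j).mpr ⟨h1, hgt⟩
          obtain ⟨jj, _, hk⟩ := hzipB j ((hmemLB j).mpr hjP)
          obtain ⟨l₁, l₂, hd⟩ := flatten_pair (hblP _ hk) [(0, jj), f (0, jj)] []
            (1, j) (f (1, j)) (by simp [hbPdef])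
          exact ⟨(1, j), l₁, l₂, rfl, hd⟩

end BorPH

/-- For every `m₂ ≥ 2`, the `2 × m₂` bishop-on-a-rook graph has the PH-property. -/
theorem borGraph_two_hasPH (m₂ : ℕ) (h : 2 ≤ m₂) : HasPH (borGraph 2 m₂) := by
  intro M hM
  classical
  have hex := SimpleGraph.Subgraph.isPerfectMatching_iff.mp hM
  choose f hf hu using hex
  have hfv : ∀ v, f v ≠ v := by
    intro v hv
    exact ((SimpleGraph.top_adj v (f v)).mp (M.adj_sub (hf v))) hv.symm
  have hfi : ∀ v, f (f v) = v := fun v => (hu (f v) v (hf v).symm).symm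
  obtain ⟨L, hlen, hcov, hchain, hhead, hlast, hpair⟩ :=
    BorPH.exists_goodList m₂ h f hfi hfv
  have hLnodup : L.Nodup := by
    refine BorPH.nodup_of_card L ?_
    have huniv : L.toFinset = Finset.univ :=
      Finset.eq_univ_iff_forall.mpr (fun v => List.mem_toFinset.mpr (hcov v))
    rw [huniv, hlen]
    simp [Finset.card_univ, Nat.mul_comm]
  obtain ⟨a, b, r, rfl, hr⟩ :
      ∃ a b r, L = a :: b :: r ∧ r ≠ [] := by
    match L, hlen with
    | [], hlen => simp at hlen; omega
    | [a], hlen => simp at hlen; omega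
    | [a, b], hlen => simp at hlen; omega
    | a :: b :: c :: r, hlen => exact ⟨a, b, c :: r, rfl, by simp⟩
  set Rr : (Fin 2 × Fin m₂) → (Fin 2 × Fin m₂) → Prop :=
    fun x y => y = f x ∨ x.1 ≠ y.1 with hRrdef
  have hRne : ∀ x y, Rr x y → x ≠ y := by
    intro x y hxy heq
    rcases hxy with rfl | hne
    · exact hfv x heq.symm
    · exact hne (by rw [heq])
  have ha0 : a.1 = 0 := hhead a (by simp)
  have hch : List.Chain Rr a ((b :: r) ++ [a]) := by
    have h1 : List.Chain' Rr ((a :: b :: r) ++ [a]) := by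
      rw [List.Chain', List.isChain_append]
      refine ⟨hchain, by simp, ?_⟩
      intro x hx y hy
      simp only [List.head?_cons, Option.mem_some_iff] at hy
      subst hy
      refine Or.inr ?_
      rw [hlast x hx, ha0]
      exact (by decide : (1 : Fin 2) ≠ 0)
    exact h1
  obtain ⟨p, hham, hpe1, hpe2⟩ :=
    BorPH.exists_hamCycle Rr hRne a b r hr hLnodup hcov hch
  refine ⟨a, p, hham, ?_, ?_⟩
  · intro e he
    induction e using Sym2.ind with
    | _ v w =>
      have hadj : M.Adj v w := SimpleGraph.Subgraph.mem_edgeSet.mp he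
      have hw : w = f v := hu v w hadj
      subst hw
      obtain ⟨u, l₁, l₂, hsu, hdec⟩ := hpair v
      have := hpe1 u (f u) l₁ l₂ hdec
      rwa [hsu] at this
  · intro e he hem
    obtain ⟨x, y, hxy, rfl⟩ := hpe2 e he
    rcases hxy with rfl | hne
    · exact absurd (SimpleGraph.Subgraph.mem_edgeSet.mpr (hf x)) hem
    · exact (SimpleGraph.mem_edgeSet (G := borGraph 2 m₂)).mpr hne
end

section
/- If m₂ ≤ m₁, then the m₁ × m₂ bishop-on-a-rook graph contains the rook graph K_{m₁} □ K_{m₂} as a spanning subgraph. -/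
open SimpleGraph

/-!
Shift column `j` of the board cyclically by `j` rows, i.e. relabel the cell `(i, j)` as
`(i + j, j)` with rows read mod `m₁`. Two rook-adjacent cells in one column keep distinct rows,
and two in one row land in distinct rows because the shifts `j < m₂ ≤ m₁` are distinct mod `m₁`.
So the relabelled rook graph is a spanning subgraph of the bishop-on-a-rook graph.
-/

section ColumnShift

variable {α β : Type*} [AddGroup α]

def columnShift (c : β → α) : α × β ≃ α × β where
  toFun p := (p.1 + c p.2, p.2)
  invFun p := (p.1 - c p.2, p.2)
  left_inv p := by simp
  right_inv p := by simp

theorem columnShift_fst_ne_of_adj {c : β → α} (hc : Function.Injective c) {p q : α × β}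
    (hpq : ((⊤ : SimpleGraph α) □ (⊤ : SimpleGraph β)).Adj p q) :
    (columnShift c p).1 ≠ (columnShift c q).1 := by
  change p.1 + c p.2 ≠ q.1 + c q.2
  rcases hpq with ⟨hrow, hcol⟩ | ⟨hcol, hrow⟩
  · rw [hcol]
    exact fun h => hrow (add_right_cancel h)
  · rw [hrow]
    exact fun h => hcol (hc (add_left_cancel h))

theorem map_columnShift_boxProd_top_le_comap_fst {c : β → α} (hc : Function.Injective c) :
    ((⊤ : SimpleGraph α) □ (⊤ : SimpleGraph β)).map (columnShift c).toEmbedding ≤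
      (⊤ : SimpleGraph α).comap Prod.fst := by
  rw [map_le_iff_le_comap]
  exact fun _ _ hpq => columnShift_fst_ne_of_adj hc hpq

end ColumnShift

theorem borGraph_eq_comap_fst (m₁ m₂ : ℕ) :
    borGraph m₁ m₂ = (⊤ : SimpleGraph (Fin m₁)).comap Prod.fst :=
  rfl

/-- If `m₂ ≤ m₁`, the `m₁ × m₂` bishop-on-a-rook graph contains the rook graph
`K_{m₁} □ K_{m₂}` as a spanning subgraph (up to isomorphism). -/
theorem rook_spanning_subgraph_of_bor (m₁ m₂ : ℕ) (h : m₂ ≤ m₁) :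
    ∃ G' : SimpleGraph (Fin m₁ × Fin m₂), G' ≤ borGraph m₁ m₂ ∧
      Nonempty ((((⊤ : SimpleGraph (Fin m₁)) □ (⊤ : SimpleGraph (Fin m₂)))) ≃g G') := by
  rcases m₁ with _ | n
  · exact ⟨_, fun p => p.1.elim0, ⟨Iso.refl⟩⟩
  · refine ⟨_, ?_, ⟨Iso.map (columnShift (Fin.castLE h)) _⟩⟩
    rw [borGraph_eq_comap_fst]
    exact map_columnShift_boxProd_top_le_comap_fst (Fin.castLE_injective h)
end
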